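/- Let μ, μ' ∈ E_p and suppose ε(μ)=ε(μ'), χ̄^{(p)}_{Λ̄_1}(μ) = χ̄^{(p)}_{Λ̄_1}(μ') and χ̄^{(p)}_{Λ̄_2}(μ) = χ̄^{(p)}_{Λ̄_2}(μ'). Then μ = μ'. -/

import Mathlib

open Complex Real

/-- The level-`p` 'q'-character of the first fundamental `sl(3)` representation,
evaluated at the weight `μ` with shifted Dynkin labels `(a1, a2) = (⟨μ+ρ̄,α_1⟩,
⟨μ+ρ̄,α_2⟩)`: the sum `Σ_j e^{-2πi⟨e_j, μ+ρ̄⟩/p}` over the weights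
`e_1 = ω_1, e_2 = ω_2−ω_1, e_3 = −ω_2` (so `⟨e_1,μ+ρ̄⟩ = (2a1+a2)/3` etc.). -/
noncomputable def chiFund1 (p : ℕ) (a1 a2 : ℤ) : ℂ :=
  Complex.exp (-(2 * (π : ℂ) * I * (2 * (a1 : ℂ) + (a2 : ℂ))) / (3 * (p : ℂ))) +
    Complex.exp (-(2 * (π : ℂ) * I * ((a2 : ℂ) - (a1 : ℂ))) / (3 * (p : ℂ))) +
    Complex.exp (2 * (π : ℂ) * I * ((a1 : ℂ) + 2 * (a2 : ℂ)) / (3 * (p : ℂ)))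

/-- The level-`p` 'q'-character of the second fundamental representation. -/
noncomputable def chiFund2 (p : ℕ) (a1 a2 : ℤ) : ℂ :=
  Complex.exp (2 * (π : ℂ) * I * (2 * (a1 : ℂ) + (a2 : ℂ)) / (3 * (p : ℂ))) +
    Complex.exp (2 * (π : ℂ) * I * ((a2 : ℂ) - (a1 : ℂ)) / (3 * (p : ℂ))) +
    Complex.exp (-(2 * (π : ℂ) * I * ((a1 : ℂ) + 2 * (a2 : ℂ))) / (3 * (p : ℂ)))
/-!
With `ζ = e^{2πi/(3p)}`, a weight with shifted labels `(a₁, a₂)` gives the three numbers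
`ζ^{-(2a₁+a₂)}, ζ^{a₁-a₂}, ζ^{a₁+2a₂}` with product `1`; `chiFund1` is their sum and
`chiFund2` the sum of their pairwise products. Equal characters therefore give equal
multisets of these three numbers (Vieta), i.e. the integer exponent triples agree modulo `3p`
up to a permutation. All exponents lie in `[-3p, 3p]`, so each congruence is an equality up
to a shift by `0, ±3p, ±6p`, and the resulting linear constraints force `a = b`, except for
the reflections exchanging `E_p^{(+)}` and `E_p^{(-)}`, which the sign condition rules out.
-/

theorem eq_and_eq_or_eq_and_eq_of_add_eq_of_mul_eq {R : Type*} [CommRing R]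
    [NoZeroDivisors R] {a b c d : R} (hs : a + b = c + d) (hp : a * b = c * d) :
    c = a ∧ d = b ∨ c = b ∧ d = a := by
  have hc : (c - a) * (c - b) = 0 := by linear_combination (-c) * hs + hp
  rcases mul_eq_zero.mp hc with hca | hcb
  · exact .inl ⟨by linear_combination hca, by linear_combination -hs - hca⟩
  · exact .inr ⟨by linear_combination hcb, by linear_combination -hs - hcb⟩

theorem perm_of_esymm_eq {R : Type*} [CommRing R] [NoZeroDivisors R]
    {u₁ u₂ u₃ v₁ v₂ v₃ : R}
    (h₁ : u₁ + u₂ + u₃ = v₁ + v₂ + v₃)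
    (h₂ : u₁ * u₂ + u₁ * u₃ + u₂ * u₃ = v₁ * v₂ + v₁ * v₃ + v₂ * v₃)
    (h₃ : u₁ * u₂ * u₃ = v₁ * v₂ * v₃) :
    v₁ = u₁ ∧ (v₂ = u₂ ∧ v₃ = u₃ ∨ v₂ = u₃ ∧ v₃ = u₂) ∨
    v₁ = u₂ ∧ (v₂ = u₁ ∧ v₃ = u₃ ∨ v₂ = u₃ ∧ v₃ = u₁) ∨
    v₁ = u₃ ∧ (v₂ = u₁ ∧ v₃ = u₂ ∨ v₂ = u₂ ∧ v₃ = u₁) := by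
  have hv₁ : (v₁ - u₁) * (v₁ - u₂) * (v₁ - u₃) = 0 := by
    linear_combination (-v₁ ^ 2) * h₁ + v₁ * h₂ - h₃
  -- once `v₁` is known, `v₂` and `v₃` have the sum and product of the remaining two `uᵢ`
  rcases mul_eq_zero.mp hv₁ with hv₁ | hv₁
  · rcases mul_eq_zero.mp hv₁ with hv₁ | hv₁ <;> rw [sub_eq_zero] at hv₁ <;> subst hv₁
    · exact .inl ⟨rfl, eq_and_eq_or_eq_and_eq_of_add_eq_of_mul_eq
        (by linear_combination h₁) (by linear_combination h₂ - v₁ * h₁)⟩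
    · exact .inr <| .inl ⟨rfl, eq_and_eq_or_eq_and_eq_of_add_eq_of_mul_eq
        (by linear_combination h₁) (by linear_combination h₂ - v₁ * h₁)⟩
  · rw [sub_eq_zero] at hv₁
    subst hv₁
    exact .inr <| .inr ⟨rfl, eq_and_eq_or_eq_and_eq_of_add_eq_of_mul_eq
        (by linear_combination h₁) (by linear_combination h₂ - v₁ * h₁)⟩

theorem IsPrimitiveRoot.zpow_eq_zpow_iff_modEq {G₀ : Type*} [CommGroupWithZero G₀] {ζ : G₀}
    {k : ℕ} (h : IsPrimitiveRoot ζ k) (hk : k ≠ 0) {m n : ℤ} :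
    ζ ^ m = ζ ^ n ↔ m ≡ n [ZMOD k] := by
  have hζ : ζ ≠ 0 := h.ne_zero hk
  rw [Int.modEq_iff_dvd, ← h.zpow_eq_one_iff_dvd, zpow_sub₀ hζ,
    div_eq_one_iff_eq (zpow_ne_zero _ hζ), eq_comm]

theorem Int.eq_or_eq_add_or_eq_sub_of_modEq {q m n : ℤ} (h : m ≡ n [ZMOD q])
    (hmn : n - m < 3 * q) (hnm : m - n < 3 * q) :
    n = m ∨ n = m + q ∨ n = m - q ∨ n = m + 2 * q ∨ n = m - 2 * q := by
  obtain ⟨k, hk⟩ := Int.modEq_iff_dvd.mp h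
  have hq : 0 < q := by omega
  have hk₁ : k < 3 := by nlinarith
  have hk₂ : -3 < k := by nlinarith
  interval_cases k <;> omega

noncomputable def zeta (p : ℕ) : ℂ := exp (2 * π * I / (3 * p))

theorem isPrimitiveRoot_zeta {p : ℕ} (hp : p ≠ 0) : IsPrimitiveRoot (zeta p) (3 * p) := by
  simpa [zeta] using Complex.isPrimitiveRoot_exp (3 * p) (by omega)

theorem zeta_ne_zero (p : ℕ) : zeta p ≠ 0 := Complex.exp_ne_zero _

theorem chiFund1_eq_zeta_zpow (p : ℕ) (a₁ a₂ : ℤ) :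
    chiFund1 p a₁ a₂ =
      zeta p ^ (-(2 * a₁ + a₂)) + zeta p ^ (a₁ - a₂) + zeta p ^ (a₁ + 2 * a₂) := by
  simp only [chiFund1, zeta, ← Complex.exp_int_mul]
  push_cast
  ring_nf

theorem chiFund2_eq_zeta_zpow (p : ℕ) (a₁ a₂ : ℤ) :
    chiFund2 p a₁ a₂ =
      zeta p ^ (-(2 * a₁ + a₂)) * zeta p ^ (a₁ - a₂) +
        zeta p ^ (-(2 * a₁ + a₂)) * zeta p ^ (a₁ + 2 * a₂) +
        zeta p ^ (a₁ - a₂) * zeta p ^ (a₁ + 2 * a₂) := by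
  simp only [← zpow_add₀ (zeta_ne_zero p)]
  simp only [chiFund2, zeta, ← Complex.exp_int_mul]
  push_cast
  ring_nf

theorem zeta_zpow_mul_zpow_mul_zpow (p : ℕ) (a₁ a₂ : ℤ) :
    zeta p ^ (-(2 * a₁ + a₂)) * zeta p ^ (a₁ - a₂) * zeta p ^ (a₁ + 2 * a₂) = 1 := by
  rw [← zpow_add₀ (zeta_ne_zero p), ← zpow_add₀ (zeta_ne_zero p)]
  ring_nf
  exact zpow_zero _

theorem labels_eq_of_exponents_modEq {p a₁ a₂ b₁ b₂ : ℤ}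
    (ha₁ : 1 ≤ a₁) (ha₁' : a₁ ≤ p) (ha₂ : 1 ≤ a₂) (ha₂' : a₂ ≤ p)
    (hb₁ : 1 ≤ b₁) (hb₁' : b₁ ≤ p) (hb₂ : 1 ≤ b₂) (hb₂' : b₂ ≤ p)
    (hsign : a₁ + a₂ ≤ p ↔ b₁ + b₂ ≤ p)
    (h : -(2 * b₁ + b₂) ≡ -(2 * a₁ + a₂) [ZMOD 3 * p] ∧
          (b₁ - b₂ ≡ a₁ - a₂ [ZMOD 3 * p] ∧
              b₁ + 2 * b₂ ≡ a₁ + 2 * a₂ [ZMOD 3 * p] ∨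
            b₁ - b₂ ≡ a₁ + 2 * a₂ [ZMOD 3 * p] ∧
              b₁ + 2 * b₂ ≡ a₁ - a₂ [ZMOD 3 * p]) ∨
        -(2 * b₁ + b₂) ≡ a₁ - a₂ [ZMOD 3 * p] ∧
          (b₁ - b₂ ≡ -(2 * a₁ + a₂) [ZMOD 3 * p] ∧
              b₁ + 2 * b₂ ≡ a₁ + 2 * a₂ [ZMOD 3 * p] ∨
            b₁ - b₂ ≡ a₁ + 2 * a₂ [ZMOD 3 * p] ∧
              b₁ + 2 * b₂ ≡ -(2 * a₁ + a₂) [ZMOD 3 * p]) ∨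
        -(2 * b₁ + b₂) ≡ a₁ + 2 * a₂ [ZMOD 3 * p] ∧
          (b₁ - b₂ ≡ -(2 * a₁ + a₂) [ZMOD 3 * p] ∧
              b₁ + 2 * b₂ ≡ a₁ - a₂ [ZMOD 3 * p] ∨
            b₁ - b₂ ≡ a₁ - a₂ [ZMOD 3 * p] ∧
              b₁ + 2 * b₂ ≡ -(2 * a₁ + a₂) [ZMOD 3 * p])) :
    a₁ = b₁ ∧ a₂ = b₂ := by
  rcases h with ⟨h₁, ⟨h₂, h₃⟩ | ⟨h₂, h₃⟩⟩ | ⟨h₁, ⟨h₂, h₃⟩ | ⟨h₂, h₃⟩⟩ |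
    ⟨h₁, ⟨h₂, h₃⟩ | ⟨h₂, h₃⟩⟩ <;>
  · have := Int.eq_or_eq_add_or_eq_sub_of_modEq h₁ (by omega) (by omega)
    have := Int.eq_or_eq_add_or_eq_sub_of_modEq h₂ (by omega) (by omega)
    have := Int.eq_or_eq_add_or_eq_sub_of_modEq h₃ (by omega) (by omega)
    omega

theorem statement18_general (p : ℕ)
    (a1 a2 b1 b2 : ℤ)
    (ha1 : 1 ≤ a1) (ha1' : a1 ≤ (p : ℤ)) (ha2 : 1 ≤ a2) (ha2' : a2 ≤ (p : ℤ))
    (hb1 : 1 ≤ b1) (hb1' : b1 ≤ (p : ℤ)) (hb2 : 1 ≤ b2) (hb2' : b2 ≤ (p : ℤ))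
    (hsign : a1 + a2 ≤ (p : ℤ) ↔ b1 + b2 ≤ (p : ℤ))
    (hchi1 : chiFund1 p a1 a2 = chiFund1 p b1 b2)
    (hchi2 : chiFund2 p a1 a2 = chiFund2 p b1 b2) :
    a1 = b1 ∧ a2 = b2 := by
  have hp : p ≠ 0 := by omega
  rw [chiFund1_eq_zeta_zpow, chiFund1_eq_zeta_zpow] at hchi1
  rw [chiFund2_eq_zeta_zpow, chiFund2_eq_zeta_zpow] at hchi2
  have h := perm_of_esymm_eq hchi1 hchi2
    ((zeta_zpow_mul_zpow_mul_zpow p a1 a2).trans (zeta_zpow_mul_zpow_mul_zpow p b1 b2).symm)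
  simp only [(isPrimitiveRoot_zeta hp).zpow_eq_zpow_iff_modEq (by omega), Nat.cast_mul,
    Nat.cast_ofNat] at h
  exact labels_eq_of_exponents_modEq ha1 ha1' ha2 ha2' hb1 hb1' hb2 hb2' hsign h

/-- let `μ, μ' ∈ E_p` (with shifted labels `a_i = ⟨μ+ρ̄,α_i⟩ ∈ [1,p]`,
`b_i = ⟨μ'+ρ̄,α_i⟩ ∈ [1,p]`), with `ε(μ) = ε(μ')` (i.e. `μ,μ'` lie in the same half
`E_p^{(±)}`, cut out by `⟨·+ρ̄,θ⟩ ≤ p`), and suppose the two fundamental level-`p`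
'q'-characters agree at `μ` and `μ'`. Then `μ = μ'`. -/
theorem statement18 (p : ℕ) (hp : 2 ≤ p) (hcop : Nat.Coprime p 3)
    (a1 a2 b1 b2 : ℤ)
    (ha1 : 1 ≤ a1) (ha1' : a1 ≤ (p : ℤ)) (ha2 : 1 ≤ a2) (ha2' : a2 ≤ (p : ℤ))
    (hb1 : 1 ≤ b1) (hb1' : b1 ≤ (p : ℤ)) (hb2 : 1 ≤ b2) (hb2' : b2 ≤ (p : ℤ))
    (hsign : a1 + a2 ≤ (p : ℤ) ↔ b1 + b2 ≤ (p : ℤ))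
    (hchi1 : chiFund1 p a1 a2 = chiFund1 p b1 b2)
    (hchi2 : chiFund2 p a1 a2 = chiFund2 p b1 b2) :
    a1 = b1 ∧ a2 = b2 :=
  statement18_general p a1 a2 b1 b2 ha1 ha1' ha2 ha2' hb1 hb1' hb2 hb2' hsign hchi1 hchi2
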